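/- arXiv:1908.01628 — 2 statements merged into one kernel-verified Lean document; each statement's English description precedes it below -/
import Mathlib

section
/- With notation as in the paper, the variance of the stratum-specific sample covariance s_{ibd} in a simple random sample of size n_{1i} ≥ 2 without replacement from a stratum of size n_i satisfies var(s_{ibd}) ≤ 16 · max_{j=1,…,n_i} (b_{ij} − b_{i·})² · (n_{0i}/(n_i n_{1i})) · S²_{id}. -/
open Finset

/-- Population mean over a finite population of size `n`. -/
noncomputable def pMean (n : ℕ) (y : Fin n → ℝ) : ℝ := (∑ j, y j) / n

/-- Population variance with divisor `n - 1`. -/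
noncomputable def pVar (n : ℕ) (y : Fin n → ℝ) : ℝ :=
  (∑ j, (y j - pMean n y) ^ 2) / ((n : ℝ) - 1)

/-- Sample covariance (divisor `n₁ − 1`) over the sampled subset `S` of size `n₁`. -/
noncomputable def sCov (n n₁ : ℕ) (b d : Fin n → ℝ) (S : Finset (Fin n)) : ℝ :=
  (∑ j ∈ S, (b j - (∑ k ∈ S, b k) / (n₁ : ℝ)) * (d j - (∑ k ∈ S, d k) / (n₁ : ℝ))) /
    ((n₁ : ℝ) - 1)

/-- Expectation under the uniform distribution over subsets of size `n₁` of `Fin n`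
(simple random sampling without replacement). -/
noncomputable def srsE (n n₁ : ℕ) (f : Finset (Fin n) → ℝ) : ℝ :=
  (∑ S ∈ Finset.powersetCard n₁ (Finset.univ : Finset (Fin n)), f S) / (n.choose n₁ : ℝ)

/-! ### Auxiliary lemmas -/

lemma card_filter_superset {n k : ℕ} (t : Finset (Fin n)) (ht : t.card ≤ k) :
    ((Finset.powersetCard k (Finset.univ : Finset (Fin n))).filter (fun S => t ⊆ S)).card
      = (n - t.card).choose (k - t.card) := by
  have hc : ((Finset.univ : Finset (Fin n)) \ t).card = n - t.card := by
    rw [Finset.card_sdiff_of_subset (Finset.subset_univ t)]; simp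
  rw [← hc, ← Finset.card_powersetCard (k - t.card) (Finset.univ \ t)]
  apply Finset.card_bij' (fun S _ => S \ t) (fun A _ => A ∪ t)
  · intro S hS
    simp only [Finset.mem_filter, Finset.mem_powersetCard] at hS
    simp only [Finset.mem_powersetCard]
    constructor
    · intro x hx; simp only [Finset.mem_sdiff] at hx ⊢
      exact ⟨Finset.mem_univ _, hx.2⟩
    · rw [Finset.card_sdiff_of_subset hS.2, hS.1.2]
  · intro A hA
    simp only [Finset.mem_powersetCard] at hA
    have hdisj : Disjoint A t := by
      intro x hx1 hx2 y hy
      have := hA.1 (hx1 hy)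
      simp only [Finset.mem_sdiff] at this
      exact absurd (hx2 hy) this.2
    simp only [Finset.mem_filter, Finset.mem_powersetCard]
    refine ⟨⟨Finset.subset_univ _, ?_⟩, Finset.subset_union_right⟩
    rw [Finset.card_union_of_disjoint hdisj, hA.2]
    omega
  · intro S hS
    simp only [Finset.mem_filter] at hS
    exact Finset.sdiff_union_of_subset hS.2
  · intro A hA
    simp only [Finset.mem_powersetCard] at hA
    have hdisj : Disjoint A t := by
      intro x hx1 hx2 y hy
      have := hA.1 (hx1 hy)
      simp only [Finset.mem_sdiff] at this
      exact absurd (hx2 hy) this.2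
    rw [Finset.union_sdiff_cancel_right ?_]
    · exact hdisj

lemma count_one {n n₁ : ℕ} (h1 : 1 ≤ n₁) (j : Fin n) :
    ((Finset.powersetCard n₁ (Finset.univ : Finset (Fin n))).filter (fun S => j ∈ S)).card
      = (n - 1).choose (n₁ - 1) := by
  have := card_filter_superset (n := n) (k := n₁) {j} (by simpa using h1)
  simpa [Finset.singleton_subset_iff] using this

lemma count_two {n n₁ : ℕ} (h1 : 2 ≤ n₁) {j k : Fin n} (hjk : j ≠ k) :
    ((Finset.powersetCard n₁ (Finset.univ : Finset (Fin n))).filter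
        (fun S => j ∈ S ∧ k ∈ S)).card = (n - 2).choose (n₁ - 2) := by
  have hcard : ({j, k} : Finset (Fin n)).card = 2 := by
    rw [Finset.card_insert_of_notMem (by simpa using hjk), Finset.card_singleton]
  have := card_filter_superset (n := n) (k := n₁) {j, k} (by omega)
  rw [hcard] at this
  convert this using 2
  ext S
  simp [Finset.insert_subset_iff, Finset.singleton_subset_iff]

lemma first_moment {n n₁ : ℕ} (h1 : 1 ≤ n₁) (w : Fin n → ℝ) :
    ∑ S ∈ Finset.powersetCard n₁ (Finset.univ : Finset (Fin n)), ∑ j ∈ S, w j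
      = ((n - 1).choose (n₁ - 1) : ℝ) * ∑ j, w j := by
  set P := Finset.powersetCard n₁ (Finset.univ : Finset (Fin n)) with hP
  calc ∑ S ∈ P, ∑ j ∈ S, w j
      = ∑ S ∈ P, ∑ j : Fin n, if j ∈ S then w j else 0 := by
        refine Finset.sum_congr rfl fun S _ => ?_
        rw [Finset.sum_ite_mem, Finset.univ_inter]
    _ = ∑ j : Fin n, ∑ S ∈ P, if j ∈ S then w j else 0 := Finset.sum_comm
    _ = ∑ j : Fin n, ((n - 1).choose (n₁ - 1) : ℝ) * w j := by
        refine Finset.sum_congr rfl fun j _ => ?_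
        rw [Finset.sum_ite, Finset.sum_const, Finset.sum_const_zero, add_zero,
          count_one h1 j, nsmul_eq_mul]
    _ = _ := by rw [← Finset.mul_sum]

lemma second_moment {n n₁ : ℕ} (h1 : 2 ≤ n₁) (w : Fin n → ℝ) :
    ∑ S ∈ Finset.powersetCard n₁ (Finset.univ : Finset (Fin n)), (∑ j ∈ S, w j) ^ 2
      = ((n - 1).choose (n₁ - 1) : ℝ) * ∑ j, (w j) ^ 2
        + ((n - 2).choose (n₁ - 2) : ℝ) * ((∑ j, w j) ^ 2 - ∑ j, (w j) ^ 2) := by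
  set P := Finset.powersetCard n₁ (Finset.univ : Finset (Fin n)) with hP
  have key : ∀ S : Finset (Fin n), (∑ j ∈ S, w j) ^ 2
      = ∑ j : Fin n, ∑ k : Fin n, if j ∈ S ∧ k ∈ S then w j * w k else 0 := by
    intro S
    rw [sq, Finset.sum_mul_sum]
    calc ∑ j ∈ S, ∑ k ∈ S, w j * w k
        = ∑ j ∈ S, ∑ k : Fin n, if k ∈ S then w j * w k else 0 := by
          refine Finset.sum_congr rfl fun j _ => ?_
          rw [Finset.sum_ite_mem, Finset.univ_inter]
      _ = ∑ j : Fin n, if j ∈ S then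
            (∑ k : Fin n, if k ∈ S then w j * w k else 0) else 0 := by
          rw [Finset.sum_ite_mem, Finset.univ_inter]
      _ = _ := by
          refine Finset.sum_congr rfl fun j _ => ?_
          by_cases hj : j ∈ S <;> simp [hj]
  calc ∑ S ∈ P, (∑ j ∈ S, w j) ^ 2
      = ∑ S ∈ P, ∑ j : Fin n, ∑ k : Fin n, if j ∈ S ∧ k ∈ S then w j * w k else 0 := by
        exact Finset.sum_congr rfl fun S _ => key S
    _ = ∑ j : Fin n, ∑ k : Fin n, ∑ S ∈ P, if j ∈ S ∧ k ∈ S then w j * w k else 0 := by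
        rw [Finset.sum_comm]
        exact Finset.sum_congr rfl fun j _ => Finset.sum_comm
    _ = ∑ j : Fin n, ∑ k : Fin n,
          ((P.filter (fun S => j ∈ S ∧ k ∈ S)).card : ℝ) * (w j * w k) := by
        refine Finset.sum_congr rfl fun j _ => Finset.sum_congr rfl fun k _ => ?_
        rw [Finset.sum_ite, Finset.sum_const, Finset.sum_const_zero, add_zero, nsmul_eq_mul]
    _ = ∑ j : Fin n, (((n - 1).choose (n₁ - 1) : ℝ) * (w j) ^ 2
          + ((n - 2).choose (n₁ - 2) : ℝ) * (w j * ((∑ k, w k) - w j))) := by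
        refine Finset.sum_congr rfl fun j _ => ?_
        rw [← Finset.add_sum_erase Finset.univ _ (Finset.mem_univ j)]
        have hdiag : ((P.filter (fun S => j ∈ S ∧ j ∈ S)).card : ℝ) * (w j * w j)
            = ((n - 1).choose (n₁ - 1) : ℝ) * (w j) ^ 2 := by
          have : (P.filter (fun S => j ∈ S ∧ j ∈ S)) = (P.filter (fun S => j ∈ S)) := by
            simp
          rw [this, count_one (by omega) j, sq]
        rw [hdiag]
        congr 1
        calc ∑ k ∈ Finset.univ.erase j,
              ((P.filter (fun S => j ∈ S ∧ k ∈ S)).card : ℝ) * (w j * w k)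
            = ∑ k ∈ Finset.univ.erase j,
              ((n - 2).choose (n₁ - 2) : ℝ) * (w j * w k) := by
              refine Finset.sum_congr rfl fun k hk => ?_
              rw [count_two h1 (Ne.symm (Finset.ne_of_mem_erase hk))]
          _ = ((n - 2).choose (n₁ - 2) : ℝ) * (w j * ((∑ k, w k) - w j)) := by
              rw [← Finset.mul_sum, ← Finset.mul_sum,
                Finset.sum_erase_eq_sub (Finset.mem_univ j)]
    _ = _ := by
        rw [Finset.sum_add_distrib, ← Finset.mul_sum, ← Finset.mul_sum]
        congr 1
        congr 1
        have : ∑ j, w j * ((∑ k, w k) - w j)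
            = (∑ j, w j) ^ 2 - ∑ j, (w j) ^ 2 := by
          simp only [mul_sub, Finset.sum_sub_distrib, ← Finset.sum_mul, sq]
        rw [this]

lemma choose_id1 {n n₁ : ℕ} (h1 : 1 ≤ n₁) (h2 : n₁ ≤ n) :
    n * (n - 1).choose (n₁ - 1) = n₁ * n.choose n₁ := by
  obtain ⟨m, rfl⟩ : ∃ m, n = m + 1 := ⟨n - 1, by omega⟩
  obtain ⟨k, rfl⟩ : ∃ k, n₁ = k + 1 := ⟨n₁ - 1, by omega⟩
  simp only [Nat.add_sub_cancel]
  rw [Nat.add_one_mul_choose_eq]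
  exact mul_comm _ _

lemma choose_id2 {n n₁ : ℕ} (h1 : 2 ≤ n₁) (h2 : n₁ ≤ n) :
    (n - 1) * (n - 2).choose (n₁ - 2) = (n₁ - 1) * (n - 1).choose (n₁ - 1) := by
  have h : n - 2 = (n - 1) - 1 := by omega
  rw [h]
  have h' : n₁ - 2 = (n₁ - 1) - 1 := by omega
  rw [h']
  exact choose_id1 (by omega) (by omega)

lemma srsE_T {n n₁ : ℕ} (h1 : 1 ≤ n₁) (h2 : n₁ ≤ n) (w : Fin n → ℝ) :
    srsE n n₁ (fun S => ∑ j ∈ S, w j) = ((n₁ : ℝ) / n) * ∑ j, w j := by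
  have hn0 : 0 < n := by omega
  have hn : (n : ℝ) ≠ 0 := by exact_mod_cast hn0.ne'
  have hN : (n.choose n₁ : ℝ) ≠ 0 := by exact_mod_cast (Nat.choose_pos h2).ne'
  have r1 : (n : ℝ) * ((n - 1).choose (n₁ - 1) : ℝ) = (n₁ : ℝ) * (n.choose n₁ : ℝ) := by
    exact_mod_cast choose_id1 h1 h2
  rw [srsE, first_moment h1 w]
  have hC1 : ((n - 1).choose (n₁ - 1) : ℝ) = (n₁ : ℝ) * (n.choose n₁ : ℝ) / n := by
    field_simp; linarith [r1]
  rw [hC1]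
  field_simp

lemma varT_eq {n n₁ : ℕ} (h1 : 2 ≤ n₁) (h2 : n₁ ≤ n) (w : Fin n → ℝ) :
    srsE n n₁ (fun S => (∑ j ∈ S, w j) ^ 2)
        - (srsE n n₁ (fun S => ∑ j ∈ S, w j)) ^ 2
      = ((n₁ : ℝ) * ((n : ℝ) - n₁)) / ((n : ℝ) * ((n : ℝ) - 1))
          * ((∑ j, (w j) ^ 2) - (∑ j, w j) ^ 2 / n) := by
  have hn0 : 0 < n := by omega
  have hn : (n : ℝ) ≠ 0 := by exact_mod_cast hn0.ne'
  have hn1 : (n : ℝ) - 1 ≠ 0 := by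
    have : (2:ℝ) ≤ n := by exact_mod_cast le_trans h1 h2
    linarith
  have hN : (n.choose n₁ : ℝ) ≠ 0 := by
    exact_mod_cast (Nat.choose_pos h2).ne'
  have r1 : (n : ℝ) * ((n - 1).choose (n₁ - 1) : ℝ) = (n₁ : ℝ) * (n.choose n₁ : ℝ) := by
    exact_mod_cast choose_id1 (by omega) h2
  have r2 : ((n : ℝ) - 1) * ((n - 2).choose (n₁ - 2) : ℝ)
      = ((n₁ : ℝ) - 1) * ((n - 1).choose (n₁ - 1) : ℝ) := by
    have h := choose_id2 h1 h2
    have h' : ((n - 1 : ℕ) : ℝ) * ((n - 2).choose (n₁ - 2) : ℝ)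
        = ((n₁ - 1 : ℕ) : ℝ) * ((n - 1).choose (n₁ - 1) : ℝ) := by exact_mod_cast h
    rw [Nat.cast_sub (by omega), Nat.cast_sub (by omega)] at h'
    simpa using h'
  rw [srsE, srsE, first_moment (by omega) w, second_moment h1 w]
  have hC1 : ((n - 1).choose (n₁ - 1) : ℝ) = (n₁ : ℝ) * (n.choose n₁ : ℝ) / n := by
    field_simp; linarith [r1]
  have hC2 : ((n - 2).choose (n₁ - 2) : ℝ)
      = ((n₁ : ℝ) - 1) * ((n₁ : ℝ) * (n.choose n₁ : ℝ) / n) / ((n : ℝ) - 1) := by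
    rw [← hC1]; field_simp; linarith [r2]
  rw [hC1, hC2]
  field_simp
  ring

lemma srsE_congr {n n₁ : ℕ} {f g : Finset (Fin n) → ℝ}
    (h : ∀ S ∈ Finset.powersetCard n₁ (Finset.univ : Finset (Fin n)), f S = g S) :
    srsE n n₁ f = srsE n n₁ g := by
  unfold srsE; rw [Finset.sum_congr rfl h]

lemma srsE_mono {n n₁ : ℕ} (h2 : n₁ ≤ n) {f g : Finset (Fin n) → ℝ}
    (h : ∀ S ∈ Finset.powersetCard n₁ (Finset.univ : Finset (Fin n)), f S ≤ g S) :
    srsE n n₁ f ≤ srsE n n₁ g := by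
  unfold srsE
  have hN : (0:ℝ) < (n.choose n₁ : ℝ) := by exact_mod_cast Nat.choose_pos h2
  apply div_le_div_of_nonneg_right ?_ hN.le
  exact Finset.sum_le_sum h

lemma srsE_smul {n n₁ : ℕ} (r : ℝ) (f : Finset (Fin n) → ℝ) :
    srsE n n₁ (fun S => r * f S) = r * srsE n n₁ f := by
  unfold srsE; rw [← Finset.mul_sum, mul_div_assoc]

lemma srsE_add {n n₁ : ℕ} (f g : Finset (Fin n) → ℝ) :
    srsE n n₁ (fun S => f S + g S) = srsE n n₁ f + srsE n n₁ g := by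
  unfold srsE; rw [Finset.sum_add_distrib, add_div]

lemma srsE_sub {n n₁ : ℕ} (f g : Finset (Fin n) → ℝ) :
    srsE n n₁ (fun S => f S - g S) = srsE n n₁ f - srsE n n₁ g := by
  unfold srsE; rw [Finset.sum_sub_distrib, sub_div]

lemma var_eq {n n₁ : ℕ} (h2 : n₁ ≤ n) (f : Finset (Fin n) → ℝ) :
    srsE n n₁ (fun S => (f S - srsE n n₁ f) ^ 2)
      = srsE n n₁ (fun S => f S ^ 2) - (srsE n n₁ f) ^ 2 := by
  have hN : (n.choose n₁ : ℝ) ≠ 0 := by exact_mod_cast (Nat.choose_pos h2).ne'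
  set μ := srsE n n₁ f with hμ
  have h : ∀ S : Finset (Fin n), (f S - μ) ^ 2 = f S ^ 2 - (2 * μ) * f S + μ ^ 2 := by
    intro S; ring
  rw [srsE_congr (fun S _ => h S)]
  have e1 : srsE n n₁ (fun S => f S ^ 2 - (2 * μ) * f S + μ ^ 2)
      = srsE n n₁ (fun S => f S ^ 2) - (2 * μ) * μ + μ ^ 2 := by
    rw [srsE_add, srsE_sub, srsE_smul]
    congr 1
    unfold srsE
    rw [Finset.sum_const, Finset.card_powersetCard, Finset.card_univ, Fintype.card_fin,
      nsmul_eq_mul]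
    field_simp
  rw [e1]; ring

lemma sCov_decomp {n n₁ : ℕ} (h1 : 2 ≤ n₁) (b d : Fin n → ℝ) {S : Finset (Fin n)}
    (hS : S.card = n₁) :
    sCov n n₁ b d S
      = (∑ j ∈ S, (b j - pMean n b) * (d j - pMean n d)) / ((n₁ : ℝ) - 1)
        - ((∑ j ∈ S, (b j - pMean n b)) * (∑ j ∈ S, (d j - pMean n d)))
            / ((n₁ : ℝ) * ((n₁ : ℝ) - 1)) := by
  have hm : (n₁ : ℝ) ≠ 0 := by exact_mod_cast (by omega : n₁ ≠ 0)
  have hm1 : (n₁ : ℝ) - 1 ≠ 0 := by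
    have : (2:ℝ) ≤ n₁ := by exact_mod_cast h1
    linarith
  have expand : ∀ (u v : Fin n → ℝ) (cu cv : ℝ),
      ∑ j ∈ S, (u j - cu) * (v j - cv)
        = ∑ j ∈ S, u j * v j - cu * ∑ j ∈ S, v j - cv * ∑ j ∈ S, u j
            + (n₁ : ℝ) * (cu * cv) := by
    intro u v cu cv
    have h : ∀ j : Fin n, (u j - cu) * (v j - cv)
        = u j * v j - cu * v j - cv * u j + cu * cv := by intro j; ring
    rw [Finset.sum_congr rfl (fun j _ => h j)]
    rw [Finset.sum_add_distrib, Finset.sum_sub_distrib, Finset.sum_sub_distrib,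
      Finset.sum_const, ← Finset.mul_sum, ← Finset.mul_sum, hS, nsmul_eq_mul]
  unfold sCov
  rw [expand b d _ _, expand b d (pMean n b) (pMean n d)]
  have hsb : ∑ j ∈ S, (b j - pMean n b) = ∑ j ∈ S, b j - (n₁ : ℝ) * pMean n b := by
    rw [Finset.sum_sub_distrib, Finset.sum_const, hS, nsmul_eq_mul]
  have hsd : ∑ j ∈ S, (d j - pMean n d) = ∑ j ∈ S, d j - (n₁ : ℝ) * pMean n d := by
    rw [Finset.sum_sub_distrib, Finset.sum_const, hS, nsmul_eq_mul]
  rw [hsb, hsd]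
  field_simp
  ring

lemma final_num (nr m M V : ℝ) (h2m : 2 ≤ m) (hmn : m ≤ nr) (hM : 0 ≤ M) (hV : 0 ≤ V) :
    2 * (((1 / (m - 1)) ^ 2) * (m * (nr - m) / (nr * (nr - 1)) * (M * V)))
      + 2 * ((M * m ^ 2 / ((m * (m - 1)) ^ 2)) * (m * (nr - m) / (nr * (nr - 1)) * V))
    ≤ 16 * M * ((nr - m) / (nr * m)) * (V / (nr - 1)) := by
  have h2nr : 2 ≤ nr := le_trans h2m hmn
  have hm0 : 0 < m := by linarith
  have hm1 : 0 < m - 1 := by linarith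
  have hnr0 : 0 < nr := by linarith
  have hnr1 : 0 < nr - 1 := by linarith
  have hnm : 0 ≤ nr - m := by linarith
  have key : 2 * (((1 / (m - 1)) ^ 2) * (m * (nr - m) / (nr * (nr - 1)) * (M * V)))
      + 2 * ((M * m ^ 2 / ((m * (m - 1)) ^ 2)) * (m * (nr - m) / (nr * (nr - 1)) * V))
      = 4 * (M * V * (m * (nr - m))) / (nr * (nr - 1) * (m - 1) ^ 2) := by
    field_simp
    ring
  have key2 : 16 * M * ((nr - m) / (nr * m)) * (V / (nr - 1))
      = 16 * (M * V * (nr - m)) / (nr * m * (nr - 1)) := by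
    field_simp
  rw [key, key2, div_le_div_iff₀ (by positivity) (by positivity)]
  have hfac : 0 ≤ (3 * m - 2) * (m - 2) := by nlinarith
  nlinarith [mul_nonneg (mul_nonneg (mul_nonneg hM hV) hnm) hfac,
    mul_nonneg (mul_nonneg (mul_nonneg (mul_nonneg (mul_nonneg hM hV) hnm) hfac) hnr0.le)
      hnr1.le]

/-- for a simple random sample of size `n₁` (`2 ≤ n₁ ≤ n`, `n₀ = n − n₁`),
`var(s_{bd}) ≤ 16 · max_j (b_j − b̄)² · (n₀/(n n₁)) · S²_d`. -/
theorem stmt9 (n n₁ : ℕ) (h1 : 2 ≤ n₁) (h2 : n₁ ≤ n) (b d : Fin n → ℝ) :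
    srsE n n₁ (fun S => (sCov n n₁ b d S - srsE n n₁ (sCov n n₁ b d)) ^ 2) ≤
      16 *
        (Finset.univ.sup'
          (Finset.univ_nonempty_iff.mpr (Fin.pos_iff_nonempty.mp (by omega)))
          (fun j => (b j - pMean n b) ^ 2)) *
        (((n : ℝ) - n₁) / ((n : ℝ) * n₁)) * pVar n d := by
  classical
  have hn2 : 2 ≤ n := le_trans h1 h2
  have hm2 : (2:ℝ) ≤ (n₁:ℝ) := by exact_mod_cast h1
  have hmn : (n₁:ℝ) ≤ (n:ℝ) := by exact_mod_cast h2
  have hn2' : (2:ℝ) ≤ (n:ℝ) := by exact_mod_cast hn2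
  have hm1 : (n₁:ℝ) - 1 ≠ 0 := by linarith
  have hn1 : (n:ℝ) - 1 ≠ 0 := by linarith
  have hm0 : (n₁:ℝ) ≠ 0 := by linarith
  have hn0 : (n:ℝ) ≠ 0 := by linarith
  have hne : (Finset.univ : Finset (Fin n)).Nonempty :=
    ⟨⟨0, by omega⟩, Finset.mem_univ _⟩
  set a : Fin n → ℝ := fun j => b j - pMean n b with ha
  set ev : Fin n → ℝ := fun j => d j - pMean n d with hev
  set M : ℝ := Finset.univ.sup' hne (fun j => (b j - pMean n b) ^ 2) with hMdef
  have haM : ∀ j, a j ^ 2 ≤ M := fun j =>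
    Finset.le_sup' (fun j => (b j - pMean n b) ^ 2) (Finset.mem_univ j)
  have hM0 : 0 ≤ M := le_trans (sq_nonneg (a ⟨0, by omega⟩)) (haM _)
  set V : ℝ := ∑ j, (ev j) ^ 2 with hVdef
  have hV0 : 0 ≤ V := by positivity
  have hK0 : 0 ≤ (n₁:ℝ) * ((n:ℝ) - n₁) / ((n:ℝ) * ((n:ℝ) - 1)) := by
    apply div_nonneg
    · nlinarith
    · nlinarith
  -- population facts about ev
  have hze : ∑ j, ev j = 0 := by
    simp only [hev]
    rw [Finset.sum_sub_distrib, Finset.sum_const, Finset.card_univ, Fintype.card_fin,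
      nsmul_eq_mul, pMean]
    field_simp
    ring
  have hpv : V = ((n:ℝ) - 1) * pVar n d := by
    rw [hVdef, pVar]
    field_simp
    rfl
  -- decomposition
  set X : Finset (Fin n) → ℝ := fun S => (∑ j ∈ S, a j * ev j) / ((n₁:ℝ) - 1) with hX
  set Y : Finset (Fin n) → ℝ :=
    fun S => ((∑ j ∈ S, a j) * (∑ j ∈ S, ev j)) / ((n₁:ℝ) * ((n₁:ℝ) - 1)) with hY
  have hdecomp : ∀ S ∈ Finset.powersetCard n₁ (Finset.univ : Finset (Fin n)),
      sCov n n₁ b d S = X S - Y S := by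
    intro S hS
    rw [Finset.mem_powersetCard] at hS
    exact sCov_decomp h1 b d hS.2
  have hEs : srsE n n₁ (sCov n n₁ b d) = srsE n n₁ (fun S => X S - Y S) :=
    srsE_congr hdecomp
  have hLHS : srsE n n₁ (fun S => (sCov n n₁ b d S - srsE n n₁ (sCov n n₁ b d)) ^ 2)
      = srsE n n₁ (fun S => (X S - Y S - srsE n n₁ (fun S => X S - Y S)) ^ 2) := by
    rw [← hEs]
    exact srsE_congr (fun S hS => by rw [hdecomp S hS])
  -- split variance
  have hvar2 : srsE n n₁ (fun S => (X S - Y S - srsE n n₁ (fun S => X S - Y S)) ^ 2)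
      ≤ 2 * srsE n n₁ (fun S => (X S - srsE n n₁ X) ^ 2)
        + 2 * srsE n n₁ (fun S => (Y S - srsE n n₁ Y) ^ 2) := by
    rw [srsE_sub X Y]
    have hpt : ∀ S ∈ Finset.powersetCard n₁ (Finset.univ : Finset (Fin n)),
        (X S - Y S - (srsE n n₁ X - srsE n n₁ Y)) ^ 2
          ≤ 2 * (X S - srsE n n₁ X) ^ 2 + 2 * (Y S - srsE n n₁ Y) ^ 2 := by
      intro S _
      nlinarith [sq_nonneg ((X S - srsE n n₁ X) + (Y S - srsE n n₁ Y))]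
    calc srsE n n₁ (fun S => (X S - Y S - (srsE n n₁ X - srsE n n₁ Y)) ^ 2)
        ≤ srsE n n₁ (fun S => 2 * (X S - srsE n n₁ X) ^ 2
            + 2 * (Y S - srsE n n₁ Y) ^ 2) := srsE_mono h2 hpt
      _ = _ := by
          rw [srsE_add (fun S => 2 * (X S - srsE n n₁ X) ^ 2)
            (fun S => 2 * (Y S - srsE n n₁ Y) ^ 2), srsE_smul, srsE_smul]
  -- bound the variance of X
  have hw : ∑ j, (a j * ev j) ^ 2 ≤ M * V := by
    rw [hVdef, Finset.mul_sum]
    refine Finset.sum_le_sum fun j _ => ?_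
    have h : (a j * ev j) ^ 2 = a j ^ 2 * ev j ^ 2 := by ring
    rw [h]
    exact mul_le_mul_of_nonneg_right (haM j) (sq_nonneg _)
  have hXvar : srsE n n₁ (fun S => (X S - srsE n n₁ X) ^ 2)
      ≤ ((1 / ((n₁:ℝ) - 1)) ^ 2)
          * ((n₁:ℝ) * ((n:ℝ) - (n₁:ℝ)) / ((n:ℝ) * ((n:ℝ) - 1)) * (M * V)) := by
    rw [var_eq h2 X]
    have e1 : srsE n n₁ X
        = (1 / ((n₁:ℝ) - 1)) * srsE n n₁ (fun S => ∑ j ∈ S, a j * ev j) := by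
      rw [← srsE_smul]
      exact srsE_congr (fun S _ => by rw [hX]; ring)
    have e2 : srsE n n₁ (fun S => X S ^ 2)
        = (1 / ((n₁:ℝ) - 1)) ^ 2 * srsE n n₁ (fun S => (∑ j ∈ S, a j * ev j) ^ 2) := by
      have : (1 / ((n₁:ℝ) - 1)) ^ 2 * srsE n n₁ (fun S => (∑ j ∈ S, a j * ev j) ^ 2)
          = srsE n n₁ (fun S => (1 / ((n₁:ℝ) - 1)) ^ 2 * (∑ j ∈ S, a j * ev j) ^ 2) := by
        rw [srsE_smul]
      rw [this]
      exact srsE_congr (fun S _ => by rw [hX]; ring)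
    rw [e1, e2]
    have hvt := varT_eq h1 h2 (fun j => a j * ev j)
    set A := srsE n n₁ (fun S => (∑ j ∈ S, a j * ev j) ^ 2) with hA
    set B := srsE n n₁ (fun S => ∑ j ∈ S, a j * ev j) with hB
    have step : (1 / ((n₁:ℝ) - 1)) ^ 2 * A - ((1 / ((n₁:ℝ) - 1)) * B) ^ 2
        = ((1 / ((n₁:ℝ) - 1)) ^ 2)
            * ((n₁:ℝ) * ((n:ℝ) - n₁) / ((n:ℝ) * ((n:ℝ) - 1))
              * ((∑ j, (a j * ev j) ^ 2) - (∑ j, a j * ev j) ^ 2 / n)) := by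
      linear_combination ((1 / ((n₁:ℝ) - 1)) ^ 2) * hvt
    rw [step]
    apply mul_le_mul_of_nonneg_left _ (by positivity)
    apply mul_le_mul_of_nonneg_left _ hK0
    have hnn : 0 ≤ (∑ j, a j * ev j) ^ 2 / (n:ℝ) := by positivity
    linarith [hw]
  -- bound the variance of Y
  have hTe : srsE n n₁ (fun S => (∑ j ∈ S, ev j) ^ 2)
      = (n₁:ℝ) * ((n:ℝ) - n₁) / ((n:ℝ) * ((n:ℝ) - 1)) * V := by
    have hvt := varT_eq h1 h2 ev
    rw [srsE_T (by omega) h2 ev, hze] at hvt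
    rw [hVdef]
    linear_combination hvt
  have hYvar : srsE n n₁ (fun S => (Y S - srsE n n₁ Y) ^ 2)
      ≤ (M * (n₁:ℝ) ^ 2 / (((n₁:ℝ) * ((n₁:ℝ) - 1)) ^ 2))
          * ((n₁:ℝ) * ((n:ℝ) - (n₁:ℝ)) / ((n:ℝ) * ((n:ℝ) - 1)) * V) := by
    rw [var_eq h2 Y]
    have step1 : srsE n n₁ (fun S => Y S ^ 2)
        ≤ srsE n n₁ (fun S => (M * (n₁:ℝ) ^ 2 / (((n₁:ℝ) * ((n₁:ℝ) - 1)) ^ 2))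
            * (∑ j ∈ S, ev j) ^ 2) := by
      refine srsE_mono h2 ?_
      intro S hS
      rw [Finset.mem_powersetCard] at hS
      have hTa : (∑ j ∈ S, a j) ^ 2 ≤ (n₁:ℝ) ^ 2 * M := by
        calc (∑ j ∈ S, a j) ^ 2 ≤ (S.card : ℝ) * ∑ j ∈ S, a j ^ 2 :=
              sq_sum_le_card_mul_sum_sq
          _ ≤ (n₁:ℝ) * ((n₁:ℝ) * M) := by
              rw [hS.2]
              refine mul_le_mul_of_nonneg_left ?_ (by positivity)
              calc ∑ j ∈ S, a j ^ 2 ≤ ∑ _j ∈ S, M := Finset.sum_le_sum (fun j _ => haM j)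
                _ = (S.card : ℝ) * M := by rw [Finset.sum_const, nsmul_eq_mul]
                _ = (n₁:ℝ) * M := by rw [hS.2]
          _ = (n₁:ℝ) ^ 2 * M := by ring
      have hYsq : Y S ^ 2 = (∑ j ∈ S, a j) ^ 2 * (∑ j ∈ S, ev j) ^ 2
          / (((n₁:ℝ) * ((n₁:ℝ) - 1)) ^ 2) := by
        simp only [hY]
        rw [div_pow, mul_pow]
      rw [hYsq]
      have hnum : (∑ j ∈ S, a j) ^ 2 * (∑ j ∈ S, ev j) ^ 2
          ≤ ((n₁:ℝ) ^ 2 * M) * (∑ j ∈ S, ev j) ^ 2 :=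
        mul_le_mul_of_nonneg_right hTa (sq_nonneg _)
      calc (∑ j ∈ S, a j) ^ 2 * (∑ j ∈ S, ev j) ^ 2 / (((n₁:ℝ) * ((n₁:ℝ) - 1)) ^ 2)
          ≤ ((n₁:ℝ) ^ 2 * M) * (∑ j ∈ S, ev j) ^ 2 / (((n₁:ℝ) * ((n₁:ℝ) - 1)) ^ 2) := by
            apply div_le_div_of_nonneg_right hnum (by positivity)
        _ = (M * (n₁:ℝ) ^ 2 / (((n₁:ℝ) * ((n₁:ℝ) - 1)) ^ 2)) * (∑ j ∈ S, ev j) ^ 2 := by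
            ring
    have step2 : srsE n n₁ (fun S => (M * (n₁:ℝ) ^ 2 / (((n₁:ℝ) * ((n₁:ℝ) - 1)) ^ 2))
            * (∑ j ∈ S, ev j) ^ 2)
        = (M * (n₁:ℝ) ^ 2 / (((n₁:ℝ) * ((n₁:ℝ) - 1)) ^ 2))
            * ((n₁:ℝ) * ((n:ℝ) - (n₁:ℝ)) / ((n:ℝ) * ((n:ℝ) - 1)) * V) := by
      rw [srsE_smul, hTe]
    calc srsE n n₁ (fun S => Y S ^ 2) - srsE n n₁ Y ^ 2
        ≤ srsE n n₁ (fun S => Y S ^ 2) := by nlinarith [sq_nonneg (srsE n n₁ Y)]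
      _ ≤ _ := le_of_le_of_eq step1 step2
  -- combine
  have hcomb : srsE n n₁ (fun S => (sCov n n₁ b d S - srsE n n₁ (sCov n n₁ b d)) ^ 2)
      ≤ 16 * M * (((n:ℝ) - n₁) / ((n:ℝ) * n₁)) * pVar n d := by
    have hfin := final_num (n:ℝ) (n₁:ℝ) M V hm2 hmn hM0 hV0
    have hpv' : V / ((n:ℝ) - 1) = pVar n d := by
      rw [hpv]; exact mul_div_cancel_left₀ _ hn1
    rw [hpv'] at hfin
    calc srsE n n₁ (fun S => (sCov n n₁ b d S - srsE n n₁ (sCov n n₁ b d)) ^ 2)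
        = srsE n n₁ (fun S => (X S - Y S - srsE n n₁ (fun S => X S - Y S)) ^ 2) := hLHS
      _ ≤ 2 * srsE n n₁ (fun S => (X S - srsE n n₁ X) ^ 2)
          + 2 * srsE n n₁ (fun S => (Y S - srsE n n₁ Y) ^ 2) := hvar2
      _ ≤ 2 * (((1 / ((n₁:ℝ) - 1)) ^ 2)
            * ((n₁:ℝ) * ((n:ℝ) - (n₁:ℝ)) / ((n:ℝ) * ((n:ℝ) - 1)) * (M * V)))
          + 2 * ((M * (n₁:ℝ) ^ 2 / (((n₁:ℝ) * ((n₁:ℝ) - 1)) ^ 2))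
            * ((n₁:ℝ) * ((n:ℝ) - (n₁:ℝ)) / ((n:ℝ) * ((n:ℝ) - 1)) * V)) := by
          have := mul_le_mul_of_nonneg_left hXvar (by norm_num : (0:ℝ) ≤ 2)
          have := mul_le_mul_of_nonneg_left hYvar (by norm_num : (0:ℝ) ≤ 2)
          linarith [mul_le_mul_of_nonneg_left hXvar (by norm_num : (0:ℝ) ≤ 2),
            mul_le_mul_of_nonneg_left hYvar (by norm_num : (0:ℝ) ≤ 2)]
      _ ≤ 16 * M * (((n:ℝ) - (n₁:ℝ)) / ((n:ℝ) * (n₁:ℝ))) * pVar n d := hfin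
  exact hcomb
end

section
/- For a single stratum with n units, n₁ treated (p = n₁/n, 0 < p < 1), and potential outcomes decomposed as y_j(z) = ȳ(z) + (X_j − X̄)ᵀβ_z + ε_j(z) for z ∈ {0,1}, it holds that { S²_y(1)/n₁ + S²_y(0)/n₀ − S²_τ/n } − { S²_ε(1)/n₁ + S²_ε(0)/n₀ − S²_ε/n } = (1/n)[ βᵀ S_XX β / (p(1−p)) + (2/p) S_{Xε}(1)ᵀ β + (2/(1−p)) S_{Xε}(0)ᵀ β ], where β = (1−p)β₁ + p β₀ and n₀ = n − n₁. -/
open Finset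

/-- Population covariance with divisor `n - 1`. -/
noncomputable def pCov (n : ℕ) (b d : Fin n → ℝ) : ℝ :=
  (∑ j, (b j - pMean n b) * (d j - pMean n d)) / ((n : ℝ) - 1)

namespace Stmt13Aux

lemma pVar_eq_pCov (n : ℕ) (u : Fin n → ℝ) : pVar n u = pCov n u u := by
  unfold pVar pCov
  congr 1
  exact Finset.sum_congr rfl fun j _ => by ring

lemma pCov_comm (n : ℕ) (u v : Fin n → ℝ) : pCov n u v = pCov n v u := by
  unfold pCov
  congr 1
  exact Finset.sum_congr rfl fun j _ => by ring

lemma pMean_add (n : ℕ) (u v : Fin n → ℝ) :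
    pMean n (fun j => u j + v j) = pMean n u + pMean n v := by
  unfold pMean
  rw [Finset.sum_add_distrib, add_div]

lemma pMean_sub (n : ℕ) (u v : Fin n → ℝ) :
    pMean n (fun j => u j - v j) = pMean n u - pMean n v := by
  unfold pMean
  rw [Finset.sum_sub_distrib, sub_div]

lemma pMean_smul (n : ℕ) (r : ℝ) (u : Fin n → ℝ) :
    pMean n (fun j => r * u j) = r * pMean n u := by
  unfold pMean
  rw [← Finset.mul_sum, mul_div_assoc]

lemma pMean_sum (n : ℕ) {ι : Type*} (s : Finset ι) (f : Fin n → ι → ℝ) :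
    pMean n (fun j => ∑ k ∈ s, f j k) = ∑ k ∈ s, pMean n (fun j => f j k) := by
  unfold pMean
  rw [← Finset.sum_div, Finset.sum_comm]

lemma pMean_const_add (n : ℕ) (hn : (n : ℝ) ≠ 0) (C : ℝ) (u : Fin n → ℝ) :
    pMean n (fun j => C + u j) = C + pMean n u := by
  unfold pMean
  rw [Finset.sum_add_distrib, Finset.sum_const, Finset.card_fin, nsmul_eq_mul]
  field_simp

lemma pCov_shift_left (n : ℕ) (hn : (n : ℝ) ≠ 0) (C : ℝ) (u v : Fin n → ℝ) :
    pCov n (fun j => C + u j) v = pCov n u v := by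
  unfold pCov
  rw [pMean_const_add n hn]
  congr 1
  exact Finset.sum_congr rfl fun j _ => by ring

lemma pCov_add_left (n : ℕ) (u v w : Fin n → ℝ) :
    pCov n (fun j => u j + v j) w = pCov n u w + pCov n v w := by
  unfold pCov
  rw [pMean_add, ← add_div, ← Finset.sum_add_distrib]
  congr 1
  exact Finset.sum_congr rfl fun j _ => by ring

lemma pCov_sub_left (n : ℕ) (u v w : Fin n → ℝ) :
    pCov n (fun j => u j - v j) w = pCov n u w - pCov n v w := by
  unfold pCov
  rw [pMean_sub, ← sub_div, ← Finset.sum_sub_distrib]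
  congr 1
  exact Finset.sum_congr rfl fun j _ => by ring

lemma pCov_add_right (n : ℕ) (u v w : Fin n → ℝ) :
    pCov n u (fun j => v j + w j) = pCov n u v + pCov n u w := by
  rw [pCov_comm, pCov_add_left, pCov_comm n v u, pCov_comm n w u]

lemma pCov_sub_right (n : ℕ) (u v w : Fin n → ℝ) :
    pCov n u (fun j => v j - w j) = pCov n u v - pCov n u w := by
  rw [pCov_comm, pCov_sub_left, pCov_comm n v u, pCov_comm n w u]

lemma pCov_smul_left (n : ℕ) (r : ℝ) (u w : Fin n → ℝ) :
    pCov n (fun j => r * u j) w = r * pCov n u w := by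
  unfold pCov
  rw [pMean_smul, ← mul_div_assoc, Finset.mul_sum]
  congr 1
  exact Finset.sum_congr rfl fun j _ => by ring

lemma pCov_sum_left (n : ℕ) {ι : Type*} (s : Finset ι) (f : Fin n → ι → ℝ) (w : Fin n → ℝ) :
    pCov n (fun j => ∑ k ∈ s, f j k) w = ∑ k ∈ s, pCov n (fun j => f j k) w := by
  unfold pCov
  rw [pMean_sum, ← Finset.sum_div]
  congr 1
  rw [Finset.sum_comm]
  exact Finset.sum_congr rfl fun j _ => by
    rw [← Finset.sum_sub_distrib, Finset.sum_mul]

lemma pCov_expand2 (n : ℕ) (u v w x : Fin n → ℝ) :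
    pCov n (fun j => u j + v j) (fun j => w j + x j)
      = pCov n u w + pCov n u x + pCov n v w + pCov n v x := by
  rw [pCov_add_left, pCov_add_right, pCov_add_right]
  ring

lemma pCov_expand_sub2 (n : ℕ) (u v w x : Fin n → ℝ) :
    pCov n (fun j => u j - v j) (fun j => w j - x j)
      = pCov n u w - pCov n u x - pCov n v w + pCov n v x := by
  rw [pCov_sub_left, pCov_sub_right, pCov_sub_right]
  ring

/-- The projection term `j ↦ (X_j − X̄)ᵀγ`. -/
noncomputable def proj (n K : ℕ) (X : Fin n → Fin K → ℝ) (γ : Fin K → ℝ) : Fin n → ℝ :=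
  fun j => ∑ k, (X j k - pMean n (fun i => X i k)) * γ k

lemma pCov_proj_left (n K : ℕ) (hn : (n : ℝ) ≠ 0) (X : Fin n → Fin K → ℝ)
    (γ : Fin K → ℝ) (w : Fin n → ℝ) :
    pCov n (proj n K X γ) w = ∑ k, γ k * pCov n (fun i => X i k) w := by
  unfold proj
  rw [pCov_sum_left]
  refine Finset.sum_congr rfl fun k _ => ?_
  have h : (fun j => (X j k - pMean n (fun i => X i k)) * γ k)
      = fun j => γ k * ((-(pMean n (fun i => X i k))) + X j k) := by
    funext j; ring
  rw [h, pCov_smul_left, pCov_shift_left n hn]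

end Stmt13Aux

open Stmt13Aux

/-- for a single stratum with `n` units, `n₁` treated, `p = n₁/n`,
`n₀ = n − n₁`, and projections `y_j(z) = ȳ(z) + (X_j − X̄)ᵀβ_z + ε_j(z)`,
`{S²_y(1)/n₁ + S²_y(0)/n₀ − S²_τ/n} − {S²_ε(1)/n₁ + S²_ε(0)/n₀ − S²_ε/n}
 = (1/n)[βᵀ S_XX β/(p(1−p)) + (2/p) S_Xε(1)ᵀβ + (2/(1−p)) S_Xε(0)ᵀβ]`
with `β = (1−p)β₁ + pβ₀`. -/
theorem stmt13 (n n₁ K : ℕ) (hn : 2 ≤ n) (h1 : 1 ≤ n₁) (h2 : n₁ ≤ n - 1)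
    (y1 y0 : Fin n → ℝ) (X : Fin n → Fin K → ℝ)
    (β₁ β₀ : Fin K → ℝ) (ε1 ε0 : Fin n → ℝ)
    (hdec1 : ∀ j, y1 j = pMean n y1 +
      (∑ k, (X j k - pMean n (fun i => X i k)) * β₁ k) + ε1 j)
    (hdec0 : ∀ j, y0 j = pMean n y0 +
      (∑ k, (X j k - pMean n (fun i => X i k)) * β₀ k) + ε0 j)
    (β : Fin K → ℝ)
    (hβ : ∀ k, β k = (1 - (n₁ : ℝ) / n) * β₁ k + ((n₁ : ℝ) / n) * β₀ k) :
    (pVar n y1 / (n₁ : ℝ) + pVar n y0 / ((n : ℝ) - n₁)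
        - pVar n (fun j => y1 j - y0 j) / (n : ℝ))
      - (pVar n ε1 / (n₁ : ℝ) + pVar n ε0 / ((n : ℝ) - n₁)
        - pVar n (fun j => ε1 j - ε0 j) / (n : ℝ)) =
    (1 / (n : ℝ)) *
      ((∑ k, ∑ l, β k * pCov n (fun i => X i k) (fun i => X i l) * β l) /
          (((n₁ : ℝ) / n) * (1 - (n₁ : ℝ) / n))
        + (2 / ((n₁ : ℝ) / n)) * ∑ k, pCov n (fun i => X i k) ε1 * β k
        + (2 / (1 - (n₁ : ℝ) / n)) * ∑ k, pCov n (fun i => X i k) ε0 * β k) := by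
  have hlt : n₁ < n := by omega
  have hnpos : (0:ℝ) < n := by positivity
  have hn0 : (n:ℝ) ≠ 0 := ne_of_gt hnpos
  have h10 : (n₁:ℝ) ≠ 0 := Nat.cast_ne_zero.mpr (by omega)
  have hltR : (n₁:ℝ) < n := by exact_mod_cast hlt
  have hsub : (n:ℝ) - n₁ ≠ 0 := sub_ne_zero.mpr (ne_of_gt hltR)
  have hp0 : (n₁:ℝ)/n ≠ 0 := div_ne_zero h10 hn0
  have hplt : (n₁:ℝ)/n < 1 := (div_lt_one hnpos).mpr hltR
  have hp1 : 1 - (n₁:ℝ)/n ≠ 0 := sub_ne_zero.mpr (ne_of_gt hplt)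
  set A := proj n K X β₁ with hA
  set B := proj n K X β₀ with hB
  set Cf := proj n K X β with hCdef
  -- decompositions as function equalities
  have hy1 : y1 = fun j => pMean n y1 + (A j + ε1 j) := by
    funext j
    simp only [hA, proj]
    rw [hdec1 j]
    ring
  have hy0 : y0 = fun j => pMean n y0 + (B j + ε0 j) := by
    funext j
    simp only [hB, proj]
    rw [hdec0 j]
    ring
  have hτ : (fun j => y1 j - y0 j)
      = fun j => (pMean n y1 - pMean n y0) + ((A j - B j) + (ε1 j - ε0 j)) := by
    funext j
    simp only [hA, hB, proj]
    rw [hdec1 j, hdec0 j]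
    ring
  -- expand variances
  have E1 : pVar n y1 = pCov n A A + 2 * pCov n A ε1 + pCov n ε1 ε1 := by
    rw [pVar_eq_pCov, hy1, pCov_shift_left n hn0, pCov_comm, pCov_shift_left n hn0,
      pCov_expand2, pCov_comm n ε1 A]
    ring
  have E0 : pVar n y0 = pCov n B B + 2 * pCov n B ε0 + pCov n ε0 ε0 := by
    rw [pVar_eq_pCov, hy0, pCov_shift_left n hn0, pCov_comm, pCov_shift_left n hn0,
      pCov_expand2, pCov_comm n ε0 B]
    ring
  have Eτ : pVar n (fun j => y1 j - y0 j)
      = (pCov n A A + pCov n B B - 2 * pCov n A B)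
        + 2 * (pCov n A ε1 - pCov n A ε0 - pCov n B ε1 + pCov n B ε0)
        + (pCov n ε1 ε1 + pCov n ε0 ε0 - 2 * pCov n ε1 ε0) := by
    rw [pVar_eq_pCov, hτ, pCov_shift_left n hn0, pCov_comm, pCov_shift_left n hn0,
      pCov_expand2]
    simp only [pCov_expand_sub2]
    rw [pCov_comm n B A, pCov_comm n ε1 A, pCov_comm n ε1 B, pCov_comm n ε0 A,
      pCov_comm n ε0 B, pCov_comm n ε0 ε1]
    ring
  have Eδ : pVar n (fun j => ε1 j - ε0 j)
      = pCov n ε1 ε1 + pCov n ε0 ε0 - 2 * pCov n ε1 ε0 := by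
    rw [pVar_eq_pCov, pCov_expand_sub2, pCov_comm n ε0 ε1]
    ring
  have Ee1 : pVar n ε1 = pCov n ε1 ε1 := pVar_eq_pCov n ε1
  have Ee0 : pVar n ε0 = pCov n ε0 ε0 := pVar_eq_pCov n ε0
  -- the combined projection
  have ECf : ∀ w, pCov n Cf w
      = (1 - (n₁:ℝ)/n) * pCov n A w + ((n₁:ℝ)/n) * pCov n B w := by
    intro w
    have hC : Cf = fun j => (1 - (n₁:ℝ)/n) * A j + ((n₁:ℝ)/n) * B j := by
      funext j
      simp only [hCdef, hA, hB, proj]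
      simp only [hβ]
      rw [Finset.mul_sum, Finset.mul_sum, ← Finset.sum_add_distrib]
      exact Finset.sum_congr rfl fun k _ => by ring
    rw [hC, pCov_add_left, pCov_smul_left, pCov_smul_left]
  have E2 : (∑ k, ∑ l, β k * pCov n (fun i => X i k) (fun i => X i l) * β l)
      = pCov n Cf Cf := by
    rw [hCdef, pCov_proj_left n K hn0 X β]
    refine Finset.sum_congr rfl fun k _ => ?_
    rw [pCov_comm n (fun i => X i k) (proj n K X β), pCov_proj_left n K hn0 X β,
      Finset.mul_sum]
    refine Finset.sum_congr rfl fun l _ => ?_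
    rw [pCov_comm n (fun i => X i l) (fun i => X i k)]
    ring
  have E3 : (∑ k, pCov n (fun i => X i k) ε1 * β k) = pCov n Cf ε1 := by
    rw [hCdef, pCov_proj_left n K hn0 X β]
    exact Finset.sum_congr rfl fun k _ => mul_comm _ _
  have E4 : (∑ k, pCov n (fun i => X i k) ε0 * β k) = pCov n Cf ε0 := by
    rw [hCdef, pCov_proj_left n K hn0 X β]
    exact Finset.sum_congr rfl fun k _ => mul_comm _ _
  rw [E1, E0, Eτ, Eδ, Ee1, Ee0, E2, E3, E4, ECf Cf, pCov_comm n A Cf, ECf A,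
    pCov_comm n B Cf, ECf B, ECf ε1, ECf ε0, pCov_comm n B A]
  field_simp
  ring
end
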